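/- Let q be an odd prime power. Then there exists a q-ary quantum MDS code with parameters [[q^2 − q, q^2 − q − 2d + 2, d]] for every 2 ≤ d ≤ q, assuming the Hermitian construction; equivalently, for each 1 ≤ k ≤ q−1 there exists a Hermitian self-orthogonal [q^2−q, k, q^2−q−k+1] MDS code over F_{q^2}. -/

import Mathlib

/-!
Evaluate the polynomials of degree `< k` at the `q² - q` points `α` of `F_{q²} \ F_q`, with
column multipliers `v_α` satisfying `v_α ^ (q + 1) = η (α ^ q - α)`, where `η = ζ ^ q - ζ` for one
such point `ζ`. This generalized Reed–Solomon code is MDS. The multipliers exist because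
`η (α ^ q - α)` is fixed by `x ↦ x ^ q`, so it lies in `F_q^*`, the image of the norm
`w ↦ w ^ (q + 1)`. The Hermitian product of the codewords of `f` and `g` is
`∑ η (α ^ q - α) f(α) g(α) ^ q`; the summand vanishes on `F_q`, so the sum runs over the whole
field, where it is the sum of a polynomial of degree at most `q² - 2`, hence zero.
-/

open Polynomial Finset

variable {F : Type*} [Field F]

section GeneralizedReedSolomon

variable {ι : Type*} (a v : ι → F)

noncomputable def grsEval : F[X] →ₗ[F] (ι → F) := LinearMap.pi fun i => v i • leval (a i)

noncomputable def grsCode (k : ℕ) : Submodule F (ι → F) := (degreeLT F k).map (grsEval a v)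

@[simp]
lemma grsEval_apply (p : F[X]) (i : ι) : grsEval a v p i = v i * p.eval (a i) := rfl

variable {a v} [Fintype ι] [DecidableEq F]

lemma hammingNorm_grsEval (hv : ∀ i, v i ≠ 0) (p : F[X]) :
    hammingNorm (grsEval a v p) = Fintype.card ι - #{i | p.eval (a i) = 0} := by
  have := card_filter_add_card_filter_not (s := univ) fun i => p.eval (a i) = 0
  simp only [hammingNorm, grsEval_apply, ne_eq, mul_eq_zero, hv, false_or, card_univ] at this ⊢
  omega

lemma card_filter_eval_eq_zero_le (ha : Function.Injective a) {p : F[X]} (hp : p ≠ 0) :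
    #{i | p.eval (a i) = 0} ≤ p.natDegree := by
  rw [← card_image_of_injective _ ha]
  refine card_le_degree_of_subset_roots fun x hx => ?_
  obtain ⟨i, hi, rfl⟩ := mem_image.mp hx
  exact (mem_roots hp).mpr (mem_filter.mp hi).2

lemma card_sub_natDegree_le_hammingNorm (ha : Function.Injective a) (hv : ∀ i, v i ≠ 0)
    {p : F[X]} (hp : p ≠ 0) : Fintype.card ι - p.natDegree ≤ hammingNorm (grsEval a v p) := by
  rw [hammingNorm_grsEval hv]
  exact Nat.sub_le_sub_left (card_filter_eval_eq_zero_le ha hp) _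

lemma grsEval_ne_zero (ha : Function.Injective a) (hv : ∀ i, v i ≠ 0) {p : F[X]} (hp : p ≠ 0)
    (hdeg : p.natDegree < Fintype.card ι) : grsEval a v p ≠ 0 := by
  rw [← hammingNorm_pos_iff]
  have := card_sub_natDegree_le_hammingNorm ha hv hp
  omega

lemma finrank_grsCode (ha : Function.Injective a) (hv : ∀ i, v i ≠ 0) {k : ℕ}
    (hk : k ≤ Fintype.card ι) : Module.finrank F (grsCode a v k) = k := by
  have hinj : Function.Injective (grsEval a v ∘ₗ (degreeLT F k).subtype) := by
    rw [← LinearMap.ker_eq_bot, LinearMap.ker_eq_bot']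
    rintro ⟨p, hp⟩ h0
    by_contra hne
    have hp0 : p ≠ 0 := fun h => hne (Subtype.ext h)
    rw [mem_degreeLT, ← natDegree_lt_iff_degree_lt hp0] at hp
    exact grsEval_ne_zero ha hv hp0 (by omega) h0
  rw [grsCode, ← Submodule.range_subtype (degreeLT F k), ← LinearMap.range_comp,
    LinearMap.finrank_range_of_inj hinj,
    (degreeLTEquiv F k).finrank_eq, Module.finrank_fin_fun]

lemma le_hammingNorm_of_mem_grsCode (ha : Function.Injective a) (hv : ∀ i, v i ≠ 0) {k : ℕ}
    {x : ι → F} (hx : x ∈ grsCode a v k) (hx0 : x ≠ 0) :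
    Fintype.card ι - k + 1 ≤ hammingNorm x := by
  obtain ⟨p, hp, rfl⟩ := Submodule.mem_map.mp hx
  have hp0 : p ≠ 0 := by rintro rfl; exact hx0 (map_zero _)
  rw [mem_degreeLT, ← natDegree_lt_iff_degree_lt hp0] at hp
  have := card_sub_natDegree_le_hammingNorm ha hv hp0
  have := hammingNorm_pos_iff.mpr hx0
  omega

lemma exists_mem_grsCode_hammingNorm_eq (ha : Function.Injective a) (hv : ∀ i, v i ≠ 0) {k : ℕ}
    (hk0 : 0 < k) (hk : k ≤ Fintype.card ι) :
    ∃ x ∈ grsCode a v k, x ≠ 0 ∧ hammingNorm x = Fintype.card ι - k + 1 := by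
  classical
  obtain ⟨T, -, hT⟩ := exists_subset_card_eq (s := (univ : Finset ι)) (n := k - 1)
    (by rw [card_univ]; omega)
  set p : F[X] := ∏ j ∈ T, (X - C (a j))
  have hroot : ∀ i, p.eval (a i) = 0 ↔ i ∈ T := by
    simp [p, eval_prod, prod_eq_zero_iff, sub_eq_zero, ha.eq_iff]
  have hweight : hammingNorm (grsEval a v p) = Fintype.card ι - k + 1 := by
    rw [hammingNorm_grsEval hv, filter_congr fun i _ => hroot i, filter_univ_mem, hT]
    omega
  refine ⟨grsEval a v p, Submodule.mem_map_of_mem ?_, ?_, hweight⟩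
  · rw [mem_degreeLT, degree_prod]
    simp only [degree_X_sub_C, sum_const, nsmul_eq_mul, mul_one, hT]
    exact_mod_cast (by omega : k - 1 < k)
  · rw [← hammingNorm_pos_iff, hweight]
    omega

end GeneralizedReedSolomon

lemma natDegree_le_pred_of_mem_degreeLT {R : Type*} [Semiring R] {k : ℕ} {f : R[X]}
    (hf : f ∈ degreeLT R k) : f.natDegree ≤ k - 1 := by
  obtain rfl | hf0 := eq_or_ne f 0
  · simp
  rw [mem_degreeLT, ← natDegree_lt_iff_degree_lt hf0] at hf
  omega

lemma pow_eq_self_iff {M₀ : Type*} [MonoidWithZero M₀] [IsRightCancelMulZero M₀] {n : ℕ}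
    (hn : n ≠ 0) {x : M₀} : x ^ n = x ↔ x ^ (n - 1) = 1 ∨ x = 0 := by
  rw [← mul_left_eq_self₀, ← pow_succ, Nat.sub_add_cancel (Nat.one_le_iff_ne_zero.mpr hn)]

section FiniteField

variable [Fintype F]

lemma sum_eval_eq_zero_of_natDegree_lt {p : F[X]} (hp : p.natDegree < Fintype.card F - 1) :
    ∑ x, p.eval x = 0 := by
  simp_rw [eval_eq_sum_range]
  rw [sum_comm]
  refine sum_eq_zero fun i hi => ?_
  rw [← mul_sum, FiniteField.sum_pow_lt_card_sub_one F _ (by rw [mem_range] at hi; omega), mul_zero]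

lemma exists_isPrimitiveRoot_card_sub_one : ∃ ζ : F, IsPrimitiveRoot ζ (Fintype.card F - 1) := by
  classical
  obtain ⟨g, hg⟩ := IsCyclic.exists_ofOrder_eq_natCard (α := Fˣ)
  refine ⟨g, IsPrimitiveRoot.coe_units_iff.mpr ?_⟩
  rw [← Fintype.card_units, ← Nat.card_eq_fintype_card, ← hg]
  exact IsPrimitiveRoot.orderOf g

variable {q : ℕ} (hF : Fintype.card F = q ^ 2)
include hF

lemma two_le_of_card_eq_sq : 2 ≤ q := by
  have := hF ▸ Fintype.one_lt_card (α := F)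
  by_contra! h
  interval_cases q <;> simp at this

lemma exists_ringHom_eq_pow : ∃ φ : F →+* F, ∀ x, φ x = x ^ q := by
  obtain ⟨n, hp, hn⟩ := FiniteField.card F (ringChar F)
  have : Fact (ringChar F).Prime := ⟨hp⟩
  obtain ⟨m, -, hm⟩ := (Nat.dvd_prime_pow hp).mp (hn ▸ hF ▸ Dvd.intro_left _ (sq q).symm)
  exact ⟨iterateFrobenius F (ringChar F) m, fun x => by rw [iterateFrobenius_def, hm]⟩

lemma pow_pow_eq_self (x : F) : (x ^ q) ^ q = x := by
  rw [← pow_mul, ← sq, ← hF, FiniteField.pow_card]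

lemma sub_mul_sub_pow_eq_self (x y : F) :
    ((x ^ q - x) * (y ^ q - y)) ^ q = (x ^ q - x) * (y ^ q - y) := by
  obtain ⟨φ, hφ⟩ := exists_ringHom_eq_pow hF
  simp only [← hφ, map_mul, map_sub]
  simp only [hφ, pow_pow_eq_self hF]
  ring

lemma exists_isPrimitiveRoot_pow_add_one : ∃ w : F, IsPrimitiveRoot (w ^ (q + 1)) (q - 1) := by
  obtain ⟨ζ, hζ⟩ := exists_isPrimitiveRoot_card_sub_one (F := F)
  have hq := two_le_of_card_eq_sq hF
  refine ⟨ζ, hζ.pow (by rw [hF]; exact Nat.sub_pos_of_lt (by nlinarith)) ?_⟩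
  rw [hF, ← one_pow 2, Nat.sq_sub_sq, one_pow]

lemma card_filter_pow_eq_self [DecidableEq F] : #{x : F | x ^ q = x} = q := by
  obtain ⟨w, hw⟩ := exists_isPrimitiveRoot_pow_add_one hF
  have hq := two_le_of_card_eq_sq hF
  have hroots : ({x : F | x ^ q = x} : Finset F) = insert 0 (nthRootsFinset (q - 1) (1 : F)) := by
    ext x
    rw [mem_filter, pow_eq_self_iff (by omega), mem_insert, mem_nthRootsFinset (by omega)]
    simp [or_comm]
  have hzero : (0 : F) ∉ nthRootsFinset (q - 1) (1 : F) := by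
    simp [mem_nthRootsFinset (by omega : 0 < q - 1), zero_pow (by omega : q - 1 ≠ 0)]
  rw [hroots, card_insert_of_notMem hzero, hw.card_nthRootsFinset]
  omega

lemma exists_pow_add_one_eq {u : F} (hu : u ^ q = u) : ∃ w : F, w ^ (q + 1) = u := by
  obtain rfl | hu0 := eq_or_ne u 0
  · exact ⟨0, zero_pow (by omega)⟩
  obtain ⟨w, hw⟩ := exists_isPrimitiveRoot_pow_add_one hF
  have hq := two_le_of_card_eq_sq hF
  have : NeZero (q - 1) := ⟨by omega⟩
  obtain ⟨i, -, hi⟩ :=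
    hw.eq_pow_of_pow_eq_one (((pow_eq_self_iff (by omega)).mp hu).resolve_right hu0)
  exact ⟨w ^ i, by rw [← pow_mul, mul_comm, pow_mul, hi]⟩

lemma exists_injective_range_eq_setOf_pow_ne_self :
    ∃ a : Fin (q ^ 2 - q) → F, Function.Injective a ∧ Set.range a = {x | x ^ q ≠ x} := by
  classical
  have hcard : #{x : F | x ^ q ≠ x} = q ^ 2 - q := by
    have := card_filter_add_card_filter_not (s := univ) fun x : F => x ^ q = x
    rw [card_filter_pow_eq_self hF, card_univ, hF] at this
    simp only [ne_eq]
    omega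
  let e := ({x : F | x ^ q ≠ x} : Finset F).equivFinOfCardEq hcard
  refine ⟨fun i => (e.symm i : F), Subtype.val_injective.comp e.symm.injective, ?_⟩
  rw [Set.range_comp' Subtype.val e.symm, e.symm.surjective.range_eq, Set.image_univ,
    Subtype.range_coe]
  ext x
  simp

theorem sum_mul_pow_eq_zero_of_mem_grsCode {ι : Type*} [Fintype ι] {a v : ι → F}
    (ha : Function.Injective a) (hfix : ∀ x ∉ Set.range a, x ^ q = x) {η : F}
    (hv : ∀ i, v i ^ (q + 1) = η * (a i ^ q - a i)) {k : ℕ} (hk : k ≤ q - 1) {x y : ι → F}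
    (hx : x ∈ grsCode a v k) (hy : y ∈ grsCode a v k) : ∑ i, x i * y i ^ q = 0 := by
  obtain ⟨f, hf, rfl⟩ := Submodule.mem_map.mp hx
  obtain ⟨g, hg, rfl⟩ := Submodule.mem_map.mp hy
  obtain ⟨φ, hφ⟩ := exists_ringHom_eq_pow hF
  set P : F[X] := C η * (X ^ q - X) * f * expand F q (g.map φ)
  have hP : ∀ x, P.eval x = η * (x ^ q - x) * f.eval x * g.eval x ^ q := by
    intro x
    simp only [P, eval_mul, eval_C, eval_sub, eval_pow, eval_X, expand_eval, eval_map, ← hφ,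
      eval₂_hom]
  have hq := two_le_of_card_eq_sq hF
  have hdeg : P.natDegree < Fintype.card F - 1 := by
    have hX : (X ^ q - X : F[X]).natDegree ≤ q :=
      (natDegree_sub_le_of_le (natDegree_X_pow_le q) natDegree_X_le).trans (by omega)
    have hf' := (natDegree_le_pred_of_mem_degreeLT hf).trans (Nat.sub_le_sub_right hk 1)
    have hg' : (expand F q (g.map φ)).natDegree ≤ (q - 1 - 1) * q := by
      rw [natDegree_expand]
      exact Nat.mul_le_mul_right q
        (natDegree_map_le.trans ((natDegree_le_pred_of_mem_degreeLT hg).trans (by omega)))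
    calc P.natDegree ≤ 0 + q + (q - 1 - 1) + (q - 1 - 1) * q :=
          natDegree_mul_le_of_le (natDegree_mul_le_of_le
            (natDegree_mul_le_of_le (natDegree_C η).le hX) hf') hg'
      _ < Fintype.card F - 1 := by
        obtain ⟨m, rfl⟩ : ∃ m, q = m + 2 := ⟨q - 2, by omega⟩
        rw [hF, show m + 2 - 1 - 1 = m by omega]
        ring_nf
        omega
  calc ∑ i, grsEval a v f i * grsEval a v g i ^ q = ∑ i, P.eval (a i) := by
        refine sum_congr rfl fun i _ => ?_
        rw [hP, grsEval_apply, grsEval_apply, ← hv, pow_succ]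
        ring
    _ = ∑ x ∈ univ.map ⟨a, ha⟩, P.eval x := by rw [sum_map]; rfl
    _ = ∑ x, P.eval x := by
        refine sum_subset (subset_univ _) fun x _ hx => ?_
        rw [hP, hfix x (by simpa using hx), sub_self]
        ring
    _ = 0 := sum_eval_eq_zero_of_natDegree_lt hdeg

theorem exists_hermitian_self_orthogonal_mds_code [DecidableEq F] {k : ℕ} (hk0 : 1 ≤ k)
    (hk : k ≤ q - 1) :
    ∃ C : Submodule F (Fin (q ^ 2 - q) → F),
      Module.finrank F C = k ∧
      (∀ x ∈ C, x ≠ 0 → q ^ 2 - q - k + 1 ≤ hammingNorm x) ∧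
      (∃ x ∈ C, x ≠ 0 ∧ hammingNorm x = q ^ 2 - q - k + 1) ∧
      (∀ x ∈ C, ∀ y ∈ C, ∑ i, x i * y i ^ q = 0) := by
  have hq := two_le_of_card_eq_sq hF
  have hn : k ≤ q ^ 2 - q := by
    have : 2 * q ≤ q ^ 2 := by nlinarith
    omega
  obtain ⟨a, ha, hrange⟩ := exists_injective_range_eq_setOf_pow_ne_self hF
  have hmoved : ∀ i, a i ^ q ≠ a i := fun i => by
    simpa only [hrange, Set.mem_ofPred_eq] using Set.mem_range_self (f := a) i
  set ζ := a ⟨0, by omega⟩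
  choose v hv using fun i => exists_pow_add_one_eq hF (sub_mul_sub_pow_eq_self hF ζ (a i))
  have hv0 : ∀ i, v i ≠ 0 := fun i h0 => by
    have := hv i
    rw [h0, zero_pow (by omega), eq_comm, mul_eq_zero, sub_eq_zero, sub_eq_zero] at this
    exact this.elim (hmoved _) (hmoved i)
  refine ⟨grsCode a v k, finrank_grsCode ha hv0 (by simpa), fun x hx hx0 => ?_, ?_,
    fun x hx y hy => ?_⟩
  · simpa using le_hammingNorm_of_mem_grsCode ha hv0 hx hx0
  · simpa using exists_mem_grsCode_hammingNorm_eq ha hv0 hk0 (by simpa)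
  · exact sum_mul_pow_eq_zero_of_mem_grsCode hF ha (fun x hx => by simpa [hrange] using hx) hv hk
      hx hy

end FiniteField

theorem quantum_MDS_length_q_sq_sub_q_general
    (q : ℕ) (hodd : Odd q)
    (F : Type) [Field F] [Fintype F] [DecidableEq F] (hF : Fintype.card F = q ^ 2)
    (QMDS : ℕ → ℕ → ℕ → Prop)
    (hherm : ∀ (N k : ℕ) (C : Submodule F (Fin N → F)),
      Module.finrank F C = k →
      (∀ x ∈ C, x ≠ 0 → N - k + 1 ≤ hammingNorm x) →
      (∃ x ∈ C, x ≠ 0 ∧ hammingNorm x = N - k + 1) →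
      (∀ x ∈ C, ∀ y ∈ C, ∑ i, x i * (y i) ^ q = 0) →
      QMDS N (N - 2 * k) (k + 1)) :
    (∀ k : ℕ, 1 ≤ k → k ≤ q - 1 →
      ∃ C : Submodule F (Fin (q ^ 2 - q) → F),
        Module.finrank F C = k ∧
        (∀ x ∈ C, x ≠ 0 → q ^ 2 - q - k + 1 ≤ hammingNorm x) ∧
        (∃ x ∈ C, x ≠ 0 ∧ hammingNorm x = q ^ 2 - q - k + 1) ∧
        (∀ x ∈ C, ∀ y ∈ C, ∑ i, x i * (y i) ^ q = 0)) ∧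
    (∀ d : ℕ, 2 ≤ d → d ≤ q → QMDS (q ^ 2 - q) (q ^ 2 - q - 2 * d + 2) d) := by
  have hcodes := fun k (hk0 : 1 ≤ k) (hk : k ≤ q - 1) =>
    exists_hermitian_self_orthogonal_mds_code hF hk0 hk
  refine ⟨hcodes, fun d hd hdq => ?_⟩
  obtain ⟨C, hdim, hdist, hword, horth⟩ := hcodes (d - 1) (by omega) (by omega)
  -- with `3 ≤ q` the truncated subtraction in `q ^ 2 - q - 2 * d + 2` is harmless
  have hq : 3 ≤ q := by obtain ⟨m, rfl⟩ := hodd; have := two_le_of_card_eq_sq hF; omega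
  have hlen : 3 * q ≤ q ^ 2 := by nlinarith
  convert hherm _ _ C hdim hdist hword horth using 2 <;> omega

/-- Let `q` be an odd prime power. Assuming the Hermitian construction (`hherm`,
with `QMDS n k d` denoting existence of a `q`-ary `[[n,k,d]]` quantum MDS code), there exists a
`q`-ary quantum MDS code `[[q^2-q, q^2-q-2d+2, d]]` for every `2 ≤ d ≤ q`; equivalently, for
each `1 ≤ k ≤ q-1` there exists a Hermitian self-orthogonal `[q^2-q, k, q^2-q-k+1]` MDS code
over `F_{q^2}`. -/
theorem quantum_MDS_length_q_sq_sub_q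
    (q : ℕ) (hq : IsPrimePow q) (hodd : Odd q)
    (F : Type) [Field F] [Fintype F] [DecidableEq F] (hF : Fintype.card F = q ^ 2)
    (QMDS : ℕ → ℕ → ℕ → Prop)
    (hherm : ∀ (N k : ℕ) (C : Submodule F (Fin N → F)),
      Module.finrank F C = k →
      (∀ x ∈ C, x ≠ 0 → N - k + 1 ≤ hammingNorm x) →
      (∃ x ∈ C, x ≠ 0 ∧ hammingNorm x = N - k + 1) →
      (∀ x ∈ C, ∀ y ∈ C, ∑ i, x i * (y i) ^ q = 0) →
      QMDS N (N - 2 * k) (k + 1)) :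
    (∀ k : ℕ, 1 ≤ k → k ≤ q - 1 →
      ∃ C : Submodule F (Fin (q ^ 2 - q) → F),
        Module.finrank F C = k ∧
        (∀ x ∈ C, x ≠ 0 → q ^ 2 - q - k + 1 ≤ hammingNorm x) ∧
        (∃ x ∈ C, x ≠ 0 ∧ hammingNorm x = q ^ 2 - q - k + 1) ∧
        (∀ x ∈ C, ∀ y ∈ C, ∑ i, x i * (y i) ^ q = 0)) ∧
    (∀ d : ℕ, 2 ≤ d → d ≤ q → QMDS (q ^ 2 - q) (q ^ 2 - q - 2 * d + 2) d) :=
  quantum_MDS_length_q_sq_sub_q_general q hodd F hF QMDS hherm
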